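/- Let R be a commutative ring, m ∈ R, n ≥ 2, and let a^{(e)}_{i,j} denote the (i,j) entry of T_n(m)^e. Then for every e ≥ 1 and every 1 ≤ j ≤ n: a^{(e)}_{2,j} = U_{e-1}^{n-j-1}·U_e^{j}·C(n-2, j-1) + U_{e-1}^{n-j}·U_e^{j-2}·U_{e+1}·C(n-2, j-2), where the first summand is interpreted as 0 when j = n and the second as 0 when j = 1 (in those cases the corresponding binomial coefficient vanishes, which avoids negative exponents). -/

import Mathlib

/-- The generalized Fibonacci sequence with parameter `m`:
`U_0 = 0`, `U_1 = 1`, `U_{e+1} = m U_e + U_{e-1}`. -/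
def genFibU {R : Type*} [CommRing R] (m : R) : ℕ → R
  | 0 => 0
  | 1 => 1
  | e + 2 => m * genFibU m (e + 1) + genFibU m e

/-- The `n × n` generalized Fibonacci matrix `T_n(m)`, with 1-based `(i,j)` entry
`m^{i+j-n-1} C(i-1, n-j)` when `i + j ≥ n + 1` and `0` otherwise. -/
def genFibMatrix {R : Type*} [CommRing R] (m : R) (n : ℕ) :
    Matrix (Fin n) (Fin n) R :=
  Matrix.of fun i j =>
    if n ≤ i.val + j.val + 1 then
      m ^ (i.val + j.val + 1 - n) * (Nat.choose i.val (n - 1 - j.val) : R)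
    else 0

open Finset in
lemma vander {R : Type*} [CommRing R] (A B mm : R) (N r : ℕ) :
    ∑ k ∈ Finset.range (N+1),
      (Nat.choose N k : R) * (Nat.choose k r : R) * (A ^ (N-k) * B ^ k * mm ^ (k-r))
    = (Nat.choose N r : R) * (B ^ r * (mm * B + A) ^ (N-r)) := by
  rcases le_or_gt r N with hr | hr
  · rw [Finset.range_eq_Ico,
      ← Finset.sum_Ico_consecutive _ (Nat.zero_le r) (by omega : r ≤ N+1)]
    have h1 : ∑ k ∈ Finset.Ico 0 r,
        (Nat.choose N k : R) * (Nat.choose k r : R) * (A ^ (N-k) * B ^ k * mm ^ (k-r)) = 0 := by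
      apply Finset.sum_eq_zero
      intro k hk
      rw [Nat.choose_eq_zero_of_lt (Finset.mem_Ico.mp hk).2]
      simp
    rw [h1, zero_add, Finset.sum_Ico_eq_sum_range]
    have h2 : N + 1 - r = (N - r) + 1 := by omega
    rw [h2, add_pow, Finset.mul_sum, Finset.mul_sum]
    apply Finset.sum_congr rfl
    intro t ht
    have ht' : t ≤ N - r := by
      have := Finset.mem_range.mp ht; omega
    have hkey : (Nat.choose N (r+t) : R) * (Nat.choose (r+t) r : R)
        = (Nat.choose N r : R) * (Nat.choose (N-r) t : R) := by
      have h := Nat.choose_mul (n := N) (show r ≤ r + t by omega)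
      rw [Nat.add_sub_cancel_left] at h
      exact_mod_cast congrArg (Nat.cast (R := R)) h
    have e1 : r + t - r = t := by omega
    have e2 : N - (r + t) = N - r - t := by omega
    have e3 : B ^ (r + t) = B ^ r * B ^ t := by rw [pow_add]
    rw [e1, e2, e3]
    calc (Nat.choose N (r+t) : R) * (Nat.choose (r+t) r : R) * (A ^ (N-r-t) * (B^r * B^t) * mm ^ t)
        = ((Nat.choose N (r+t) : R) * (Nat.choose (r+t) r : R)) * (A ^ (N-r-t) * (B^r * B^t) * mm ^ t) := by ring
      _ = ((Nat.choose N r : R) * (Nat.choose (N-r) t : R)) * (A ^ (N-r-t) * (B^r * B^t) * mm ^ t) := by rw [hkey]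
      _ = (Nat.choose N r : R) * (B ^ r * ((mm*B) ^ t * A ^ (N-r-t) * (Nat.choose (N-r) t : R))) := by
          rw [mul_pow]; ring
  · rw [Nat.choose_eq_zero_of_lt hr]
    rw [Finset.sum_eq_zero]
    · simp
    · intro k hk
      rw [Nat.choose_eq_zero_of_lt (show k < r by have := Finset.mem_range.mp hk; omega)]
      simp

lemma keyconv {R : Type*} [CommRing R] (mm A B Cc : R) (hC : Cc = mm * B + A)
    (N j : ℕ) (hj : j < N + 2) :
    ∑ k ∈ Finset.range (N + 2),
      (A ^ (N+2-k-2) * B ^ (k+1) * (Nat.choose N k : R)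
        + (if k = 0 then 0 else
            A ^ (N+2-1-k) * B ^ (k-1) * Cc * (Nat.choose N (k-1) : R)))
      * (if N+2 ≤ k + j + 1 then
            mm ^ (k+j+1-(N+2)) * (Nat.choose k (N+2-1-j) : R) else 0)
    = B ^ (N+2-j-2) * Cc ^ (j+1) * (Nat.choose N j : R)
      + (if j = 0 then 0 else
          B ^ (N+2-1-j) * Cc ^ (j-1) * (mm*Cc+B) * (Nat.choose N (j-1) : R)) := by
  -- normalize the summand
  have hnorm : ∀ k ∈ Finset.range (N+2),
      (A ^ (N+2-k-2) * B ^ (k+1) * (Nat.choose N k : R)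
        + (if k = 0 then 0 else
            A ^ (N+2-1-k) * B ^ (k-1) * Cc * (Nat.choose N (k-1) : R)))
      * (if N+2 ≤ k + j + 1 then
            mm ^ (k+j+1-(N+2)) * (Nat.choose k (N+2-1-j) : R) else 0)
      = (A ^ (N-k) * B ^ (k+1) * (Nat.choose N k : R))
          * ((Nat.choose k (N+1-j) : R) * mm ^ (k-(N+1-j)))
        + (if k = 0 then 0 else
            A ^ (N+1-k) * B ^ (k-1) * Cc * (Nat.choose N (k-1) : R))
          * ((Nat.choose k (N+1-j) : R) * mm ^ (k-(N+1-j))) := by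
    intro k _
    rw [show N+2-k-2 = N-k by omega, show N+2-1-k = N+1-k by omega,
        show N+2-1-j = N+1-j by omega]
    by_cases hcase : N+2 ≤ k + j + 1
    · rw [if_pos hcase, show k+j+1-(N+2) = k - (N+1-j) by omega]
      ring
    · rw [if_neg hcase, Nat.choose_eq_zero_of_lt (show k < N+1-j by omega)]
      push_cast
      ring
  rw [Finset.sum_congr rfl hnorm, Finset.sum_add_distrib]
  -- first sum
  have hS1 : ∑ k ∈ Finset.range (N+2),
      (A ^ (N-k) * B ^ (k+1) * (Nat.choose N k : R))
        * ((Nat.choose k (N+1-j) : R) * mm ^ (k-(N+1-j)))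
      = (Nat.choose N (N+1-j) : R) * (B ^ ((N+1-j)+1) * Cc ^ (N-(N+1-j))) := by
    rw [Finset.sum_range_succ, Nat.choose_succ_self]
    push_cast
    rw [mul_zero, zero_mul, add_zero]
    have h : ∀ k ∈ Finset.range (N+1),
        (A ^ (N-k) * B ^ (k+1) * (Nat.choose N k : R))
          * ((Nat.choose k (N+1-j) : R) * mm ^ (k-(N+1-j)))
        = B * ((Nat.choose N k : R) * (Nat.choose k (N+1-j) : R)
            * (A ^ (N-k) * B ^ k * mm ^ (k-(N+1-j)))) := by
      intro k _
      rw [pow_succ]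
      ring
    rw [Finset.sum_congr rfl h, ← Finset.mul_sum, vander A B mm N (N+1-j), ← hC]
    ring
  -- second sum
  have hS2 : ∑ k ∈ Finset.range (N+2),
      (if k = 0 then 0 else
          A ^ (N+1-k) * B ^ (k-1) * Cc * (Nat.choose N (k-1) : R))
        * ((Nat.choose k (N+1-j) : R) * mm ^ (k-(N+1-j)))
      = (if N+1-j = 0 then mm * Cc * Cc ^ N
         else mm * Cc * ((Nat.choose N (N+1-j) : R)
                * (B ^ (N+1-j) * Cc ^ (N-(N+1-j))))
              + Cc * ((Nat.choose N (N+1-j-1) : R)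
                * (B ^ (N+1-j-1) * Cc ^ (N-(N+1-j-1))))) := by
    rw [Finset.sum_range_succ']
    simp only [↓reduceIte, zero_mul, add_zero]
    have hterm : ∀ l, (if l + 1 = 0 then 0 else
          A ^ (N+1-(l+1)) * B ^ (l+1-1) * Cc * (Nat.choose N (l+1-1) : R))
        * ((Nat.choose (l+1) (N+1-j) : R) * mm ^ (l+1-(N+1-j)))
        = (A ^ (N-l) * B ^ l * Cc * (Nat.choose N l : R))
            * ((Nat.choose (l+1) (N+1-j) : R) * mm ^ (l+1-(N+1-j))) := by
      intro l
      rw [if_neg (by omega), show N+1-(l+1) = N-l by omega, Nat.add_sub_cancel]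
    simp only [hterm]
    rcases Nat.eq_zero_or_pos (N+1-j) with hr0 | hrpos
    · rw [hr0, if_pos rfl]
      have h : ∀ l ∈ Finset.range (N+1),
          (A ^ (N-l) * B ^ l * Cc * (Nat.choose N l : R))
            * ((Nat.choose (l+1) 0 : R) * mm ^ (l+1-0))
          = (mm * Cc) * ((Nat.choose N l : R) * (Nat.choose l 0 : R)
              * (A ^ (N-l) * B ^ l * mm ^ (l-0))) := by
        intro l _
        simp only [Nat.choose_zero_right, Nat.cast_one, Nat.sub_zero, Nat.add_sub_cancel]
        rw [pow_succ]
        ring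
      rw [Finset.sum_congr rfl h, ← Finset.mul_sum, vander A B mm N 0, ← hC]
      simp
    · obtain ⟨r', hr'⟩ : ∃ r', N+1-j = r' + 1 := ⟨N-j, by omega⟩
      rw [hr']
      rw [if_neg (show ¬ (r' + 1 = 0) by omega), Nat.add_sub_cancel]
      have h : ∀ l ∈ Finset.range (N+1),
          (A ^ (N-l) * B ^ l * Cc * (Nat.choose N l : R))
            * ((Nat.choose (l+1) (r'+1) : R) * mm ^ (l+1-(r'+1)))
          = (mm * Cc) * ((Nat.choose N l : R) * (Nat.choose l (r'+1) : R)
              * (A ^ (N-l) * B ^ l * mm ^ (l-(r'+1))))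
            + Cc * ((Nat.choose N l : R) * (Nat.choose l r' : R)
              * (A ^ (N-l) * B ^ l * mm ^ (l-r'))) := by
        intro l _
        rw [Nat.choose_succ_succ' l r']
        push_cast
        rcases le_or_gt (r'+1) l with hcase | hcase
        · rw [show l - r' = (l - (r'+1)) + 1 by omega, pow_succ]
          ring
        · rw [Nat.choose_eq_zero_of_lt hcase]
          push_cast
          ring
      rw [Finset.sum_congr rfl h, Finset.sum_add_distrib,
          ← Finset.mul_sum, ← Finset.mul_sum,
          vander A B mm N (r'+1), vander A B mm N r', ← hC]
  rw [hS1, hS2]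
  -- now combine
  rcases Nat.eq_zero_or_pos (N+1-j) with hr0 | hrpos
  · -- j = N+1
    have hj1 : j = N + 1 := by omega
    subst hj1
    rw [if_pos hr0, if_neg (by omega)]
    rw [show N+1-(N+1) = 0 by omega, show N+2-(N+1)-2 = 0 by omega,
        show N+2-1-(N+1) = 0 by omega, show N+1-1 = N by omega,
        Nat.choose_succ_self]
    simp only [Nat.choose_zero_right, Nat.cast_one, Nat.cast_zero, pow_zero,
      Nat.sub_zero, zero_add, Nat.choose_self]
    ring
  · rw [if_neg (by omega)]
    rcases Nat.eq_zero_or_pos j with hj0 | hjpos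
    · subst hj0
      rw [if_pos rfl]
      rw [show N+1-0 = N+1 by omega, Nat.choose_succ_self,
          show N+1-1 = N by omega, show N-N = 0 by omega,
          show N+2-0-2 = N by omega, Nat.choose_self]
      simp only [Nat.cast_zero, Nat.cast_one, pow_zero, Nat.choose_zero_right]
      ring
    · obtain ⟨i, rfl⟩ : ∃ i, j = i + 1 := ⟨j - 1, by omega⟩
      rw [if_neg (by omega)]
      have hiN : i + 1 ≤ N := by omega
      rw [show N+1-(i+1) = N-i by omega, show N-(N-i) = i by omega,
          show N-i-1 = N-(i+1) by omega, show N-(N-(i+1)) = i+1 by omega,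
          show N+2-(i+1)-2 = N-(i+1) by omega, show N+2-1-(i+1) = N-i by omega,
          show (i+1)-1 = i by omega,
          Nat.choose_symm (show i ≤ N by omega),
          Nat.choose_symm (show i+1 ≤ N by omega)]
      ring

/-- Second row of `T_n(m)^e` (1-based column index `j = j.val + 1`):
`a^{(e)}_{2,j} = U_{e-1}^{n-j-1} U_e^{j} C(n-2, j-1) + U_{e-1}^{n-j} U_e^{j-2} U_{e+1} C(n-2, j-2)`,
the second summand being `0` when `j = 1` (and the first vanishing for `j = n` since
`C(n-2, n-1) = 0`). -/
theorem genFibMatrix_pow_second_row {R : Type*} [CommRing R] (m : R) (n : ℕ) (hn : 2 ≤ n) :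
    ∀ e : ℕ, 1 ≤ e → ∀ j : Fin n,
      ((genFibMatrix m n) ^ e) ⟨1, by omega⟩ j =
        genFibU m (e - 1) ^ (n - j.val - 2) * genFibU m e ^ (j.val + 1) *
            (Nat.choose (n - 2) j.val : R) +
          (if j.val = 0 then 0 else
            genFibU m (e - 1) ^ (n - 1 - j.val) * genFibU m e ^ (j.val - 1) *
              genFibU m (e + 1) * (Nat.choose (n - 2) (j.val - 1) : R)) := by
  obtain ⟨N, rfl⟩ : ∃ N, n = N + 2 := ⟨n - 2, by omega⟩
  intro e he
  obtain ⟨e, rfl⟩ : ∃ e', e = e' + 1 := ⟨e - 1, by omega⟩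
  clear he
  induction e with
  | zero =>
    intro j
    have hjlt : j.val < N + 2 := j.isLt
    simp only [zero_add, pow_one]
    have h0 : genFibU m (1 - 1) = (0 : R) := rfl
    have h1 : genFibU m 1 = (1 : R) := rfl
    have h2 : genFibU m (1 + 1) = m := by
      show m * genFibU m 1 + genFibU m 0 = m
      rw [h1]
      show m * 1 + 0 = m
      ring
    rw [h0, h1, h2]
    rw [show ((genFibMatrix m (N+2)) ⟨1, by omega⟩ j)
        = (if N + 2 ≤ 1 + j.val + 1 then
            m ^ (1 + j.val + 1 - (N+2)) * (Nat.choose 1 (N+2-1-j.val) : R) else 0) from rfl]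
    rcases lt_trichotomy j.val N with h | h | h
    · rw [if_neg (by omega), zero_pow (show N+2-j.val-2 ≠ 0 by omega)]
      by_cases hz : j.val = 0
      · rw [if_pos hz]; ring
      · rw [if_neg hz, zero_pow (show N+2-1-j.val ≠ 0 by omega)]; ring
    · rw [if_pos (by omega), h]
      rw [show 1 + N + 1 - (N+2) = 0 by omega, show N+2-1-N = 1 by omega,
          show N+2-N-2 = 0 by omega, show N+2-2 = N by omega,
          Nat.choose_self, Nat.choose_self]
      by_cases hN : N = 0
      · rw [if_pos hN]; norm_num
      · rw [if_neg hN]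
        norm_num
    · have hj : j.val = N + 1 := by omega
      rw [if_pos (by omega), hj]
      rw [show 1 + (N+1) + 1 - (N+2) = 1 by omega, show N+2-1-(N+1) = 0 by omega,
          show N+2-(N+1)-2 = 0 by omega, show N+2-2 = N by omega,
          Nat.choose_succ_self, Nat.choose_zero_right,
          if_neg (show ¬ (N+1 = 0) by omega), show N+1-1 = N by omega,
          Nat.choose_self]
      norm_num
  | succ e ih =>
    intro j
    rw [pow_succ, Matrix.mul_apply]
    simp only [ih]
    simp only [genFibMatrix, Matrix.of_apply, Nat.add_sub_cancel]
    rw [show genFibU m (e+1+1+1) = m * genFibU m (e+1+1) + genFibU m (e+1) from rfl]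
    have hsum := Fin.sum_univ_eq_sum_range (fun x =>
      (genFibU m e ^ (N + 2 - x - 2) * genFibU m (e+1) ^ (x + 1) * (Nat.choose N x : R)
        + if x = 0 then 0 else
            genFibU m e ^ (N + 2 - 1 - x) * genFibU m (e+1) ^ (x - 1)
              * genFibU m (e+1+1) * (Nat.choose N (x - 1) : R))
      * (if N + 2 ≤ x + j.val + 1 then
          m ^ (x + j.val + 1 - (N + 2)) * (Nat.choose x (N + 2 - 1 - j.val) : R) else 0))
      (N + 2)
    rw [hsum]
    exact keyconv m (genFibU m e) (genFibU m (e+1)) (genFibU m (e+1+1)) rfl N j.val j.isLt
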